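/- Let F be the bipartite graph constructed from an r-regular Ramanujan graph U (r ≥ 35) on k vertices as follows: parts V₁, V₂ are copies of V(U), with edges x₁y₂ and x₂y₁ for every edge xy of U, and edges x₁x₂ for every vertex x. Then for every A ⊆ V₁ and B ⊆ V₂ with |A| = |B| = k/3, there is at least one edge of F between A and B. -/

import Mathlib

/-- The bipartite graph `F` built from `U`: parts are copies of `V(U)`, with edges
`x₁y₂`, `x₂y₁` for every edge `xy` of `U` and `x₁x₂` for every vertex `x`. -/
def bipDouble {V : Type*} (U : SimpleGraph V) : SimpleGraph (V ⊕ V) where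
  Adj a b :=
    match a, b with
    | Sum.inl x, Sum.inr y => U.Adj x y ∨ x = y
    | Sum.inr x, Sum.inl y => U.Adj y x ∨ y = x
    | _, _ => False
  symm := by
    constructor
    intro a b h
    cases a <;> cases b <;> exact h
  loopless := by
    constructor
    intro a h
    cases a <;> exact h

/-! An edge `xy` of `U` with `x ∈ A`, `y ∈ B` gives the edge `x₁y₂`, so it suffices to find
one, whether or not `A` and `B` overlap. Expanding the bilinear form of the adjacency matrix in an
orthonormal eigenbasis, the all-ones vector spans the eigenspace of `r`, so the number of
`U`-edges from `A` to `B` deviates from `r|A||B|/k = rk/9` by at most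
`λ√|A|√|B| = λk/3` with `λ = 2√(r-1)` (expander mixing lemma), and `λ < r/3` once `r ≥ 35`. -/

open Matrix
open scoped Finset

namespace Matrix.IsHermitian
variable {n : Type*} [Fintype n] [DecidableEq n] {M : Matrix n n ℝ} (hM : M.IsHermitian)

theorem sum_eigenvectorBasis_dotProduct_mul (v w : n → ℝ) :
    ∑ i, (hM.eigenvectorBasis i ⬝ᵥ v) * (hM.eigenvectorBasis i ⬝ᵥ w) = v ⬝ᵥ w := by
  have := hM.eigenvectorBasis.sum_inner_mul_inner (WithLp.toLp 2 v) (WithLp.toLp 2 w)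
  simp only [EuclideanSpace.inner_eq_star_dotProduct, star_trivial] at this
  simpa [dotProduct_comm] using this

theorem eigenvectorBasis_dotProduct_mulVec (i : n) (w : n → ℝ) :
    hM.eigenvectorBasis i ⬝ᵥ (M *ᵥ w) = hM.eigenvalues i * (hM.eigenvectorBasis i ⬝ᵥ w) := by
  have hMt : Mᵀ = M := by rw [← conjTranspose_eq_transpose_of_trivial, hM.eq]
  have hsymm : ∀ x, x ᵥ* M = M *ᵥ x := fun x => by rw [← vecMul_transpose, hMt]
  rw [dotProduct_mulVec, hsymm, mulVec_eigenvectorBasis, smul_dotProduct, smul_eq_mul]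

theorem dotProduct_mulVec_eq_sum_eigenvalues (v w : n → ℝ) :
    v ⬝ᵥ (M *ᵥ w) =
      ∑ i, hM.eigenvalues i * (hM.eigenvectorBasis i ⬝ᵥ v) * (hM.eigenvectorBasis i ⬝ᵥ w) := by
  rw [← hM.sum_eigenvectorBasis_dotProduct_mul]
  simp only [eigenvectorBasis_dotProduct_mulVec]
  exact Finset.sum_congr rfl fun i _ => by ring

theorem eigenvectorBasis_dotProduct_eq_zero {e : n → ℝ} {a : ℝ} (he : M *ᵥ e = a • e) {i : n}
    (hi : hM.eigenvalues i ≠ a) : hM.eigenvectorBasis i ⬝ᵥ e = 0 := by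
  have h := hM.eigenvectorBasis_dotProduct_mulVec i e
  rw [he, dotProduct_smul, smul_eq_mul] at h
  exact (mul_eq_zero.mp (by linarith : (hM.eigenvalues i - a) * _ = 0)).resolve_left
    (sub_ne_zero.mpr hi)

theorem eigenvectorBasis_dotProduct_mul_of_forall_ne_eq_zero {e : n → ℝ} {i₀ : n}
    (he : ∀ i ≠ i₀, hM.eigenvectorBasis i ⬝ᵥ e = 0) (v : n → ℝ) :
    (hM.eigenvectorBasis i₀ ⬝ᵥ v) * (hM.eigenvectorBasis i₀ ⬝ᵥ e) = v ⬝ᵥ e := by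
  rw [← hM.sum_eigenvectorBasis_dotProduct_mul v e,
    Fintype.sum_eq_single i₀ fun i hi => by rw [he i hi, mul_zero]]

theorem sum_eigenvectorBasis_dotProduct_sq (v : n → ℝ) :
    ∑ i, (hM.eigenvectorBasis i ⬝ᵥ v) ^ 2 = v ⬝ᵥ v := by
  simp only [sq, hM.sum_eigenvectorBasis_dotProduct_mul]

theorem abs_dotProduct_mulVec_sub_le {i₀ : n} {e : n → ℝ}
    (he : M *ᵥ e = hM.eigenvalues i₀ • e) (he₀ : e ≠ 0) {l : ℝ} (hl : 0 ≤ l)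
    (hlt : l < |hM.eigenvalues i₀|) (hgap : ∀ i ≠ i₀, |hM.eigenvalues i| ≤ l) (v w : n → ℝ) :
    |v ⬝ᵥ (M *ᵥ w) - hM.eigenvalues i₀ * (v ⬝ᵥ e) * (w ⬝ᵥ e) / (e ⬝ᵥ e)| ≤
      l * √(v ⬝ᵥ v) * √(w ⬝ᵥ w) := by
  -- `μ i₀` is a simple eigenvalue, so `e` is orthogonal to all other eigenvectors
  have hperp : ∀ i ≠ i₀, hM.eigenvectorBasis i ⬝ᵥ e = 0 := fun i hi =>
    hM.eigenvectorBasis_dotProduct_eq_zero he fun h => (hgap i hi).not_gt (h ▸ hlt)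
  have hproj := hM.eigenvectorBasis_dotProduct_mul_of_forall_ne_eq_zero hperp
  set b := hM.eigenvectorBasis
  set μ := hM.eigenvalues
  have hbe : b i₀ ⬝ᵥ e ≠ 0 := fun h =>
    he₀ (dotProduct_self_eq_zero.mp (by rw [← hproj e, h, mul_zero]))
  have hhead : μ i₀ * (v ⬝ᵥ e) * (w ⬝ᵥ e) / (e ⬝ᵥ e) = μ i₀ * (b i₀ ⬝ᵥ v) * (b i₀ ⬝ᵥ w) := by
    rw [← hproj v, ← hproj w, ← hproj e]
    field_simp
  have hsq (u : n → ℝ) : ∑ i ∈ Finset.univ.erase i₀, |b i ⬝ᵥ u| ^ 2 ≤ u ⬝ᵥ u := by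
    rw [← hM.sum_eigenvectorBasis_dotProduct_sq]
    simp only [sq_abs]
    exact Finset.sum_le_sum_of_subset_of_nonneg (Finset.erase_subset _ _)
      fun i _ _ => sq_nonneg _
  rw [hM.dotProduct_mulVec_eq_sum_eigenvalues, ← Finset.add_sum_erase _ _ (Finset.mem_univ i₀),
    hhead, add_sub_cancel_left]
  calc |∑ i ∈ Finset.univ.erase i₀, μ i * (b i ⬝ᵥ v) * (b i ⬝ᵥ w)|
      ≤ ∑ i ∈ Finset.univ.erase i₀, |μ i| * (|b i ⬝ᵥ v| * |b i ⬝ᵥ w|) := by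
        refine (Finset.abs_sum_le_sum_abs _ _).trans_eq (Finset.sum_congr rfl fun i _ => ?_)
        rw [mul_assoc, abs_mul, abs_mul]
    _ ≤ ∑ i ∈ Finset.univ.erase i₀, l * (|b i ⬝ᵥ v| * |b i ⬝ᵥ w|) :=
        Finset.sum_le_sum fun i hi => mul_le_mul_of_nonneg_right
          (hgap i (Finset.ne_of_mem_erase hi)) (by positivity)
    _ ≤ l * (√(v ⬝ᵥ v) * √(w ⬝ᵥ w)) := by
        rw [← Finset.mul_sum]
        refine mul_le_mul_of_nonneg_left ?_ hl
        refine (Real.sum_mul_le_sqrt_mul_sqrt (Finset.univ.erase i₀) (fun i => |b i ⬝ᵥ v|)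
          (fun i => |b i ⬝ᵥ w|)).trans ?_
        exact mul_le_mul (Real.sqrt_le_sqrt (hsq v)) (Real.sqrt_le_sqrt (hsq w))
          (Real.sqrt_nonneg _) (Real.sqrt_nonneg _)
    _ = l * √(v ⬝ᵥ v) * √(w ⬝ᵥ w) := by ring

end Matrix.IsHermitian

theorem indicator_one_dotProduct {V α : Type*} [Fintype V] [NonAssocSemiring α]
    (s : Finset V) (f : V → α) : (s : Set V).indicator 1 ⬝ᵥ f = ∑ x ∈ s, f x := by
  classical
  simp [dotProduct, Set.indicator_apply, Finset.sum_ite_mem]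

namespace SimpleGraph
variable {V : Type*} [Fintype V] [DecidableEq V] {G : SimpleGraph V} [DecidableRel G.Adj]

theorem abs_sum_adjMatrix_sub_le {d : ℕ} (hd : G.IsRegularOfDegree d)
    (hG : (G.adjMatrix ℝ).IsHermitian) {i₀ : V} (hi₀ : hG.eigenvalues i₀ = d) {l : ℝ}
    (hl : 0 ≤ l) (hld : l < d) (hgap : ∀ i ≠ i₀, |hG.eigenvalues i| ≤ l) (s t : Finset V) :
    |∑ x ∈ s, ∑ y ∈ t, G.adjMatrix ℝ x y - d * #s * #t / Fintype.card V| ≤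
      l * √(#s) * √(#t) := by
  have : Nonempty V := ⟨i₀⟩
  have hone : G.adjMatrix ℝ *ᵥ 1 = hG.eigenvalues i₀ • 1 := by
    ext x
    simpa [hi₀] using adjMatrix_mulVec_const_apply_of_regular (α := ℝ) (a := 1) hd (v := x)
  have hlt : l < |hG.eigenvalues i₀| := by rwa [hi₀, Nat.abs_cast]
  have := hG.abs_dotProduct_mulVec_sub_le hone one_ne_zero hl hlt hgap
    ((s : Set V).indicator 1) ((t : Set V).indicator 1)
  have hcard (u : Finset V) : (u : Set V).indicator 1 ⬝ᵥ (u : Set V).indicator 1 = (#u : ℝ) := by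
    rw [indicator_one_dotProduct, Finset.sum_congr rfl fun x hx =>
      Set.indicator_of_mem (Finset.mem_coe.2 hx) 1]
    simp
  have hsum : (s : Set V).indicator 1 ⬝ᵥ (G.adjMatrix ℝ *ᵥ (t : Set V).indicator 1) =
      ∑ x ∈ s, ∑ y ∈ t, G.adjMatrix ℝ x y := by
    simp only [indicator_one_dotProduct, mulVec, dotProduct_comm (G.adjMatrix ℝ _)]
  rw [hsum, hcard, hcard, indicator_one_dotProduct, indicator_one_dotProduct, dotProduct_one] at this
  simpa [hi₀] using this

end SimpleGraph

theorem two_mul_sqrt_sub_one_lt_div_three {r : ℝ} (hr : 35 ≤ r) : 2 * √(r - 1) < r / 3 := by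
  have h : √(r - 1) < r / 6 := by
    rw [Real.sqrt_lt' (by linarith)]
    nlinarith
  linarith

/-- If `U` is an `r`-regular Ramanujan graph (`r ≥ 35`) on `k` vertices, then in the
bipartite graph `F = bipDouble U`, any `A ⊆ V₁` and `B ⊆ V₂` with `|A| = |B| = k/3`
are joined by at least one edge of `F`. -/
theorem stmt4 {V : Type*} [Fintype V] [DecidableEq V] (U : SimpleGraph V)
    [DecidableRel U.Adj] (r : ℕ) (hr : 35 ≤ r) (hreg : U.IsRegularOfDegree r)
    (hHerm : (U.adjMatrix ℝ).IsHermitian)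
    (hRam : ∃ v₀ : V, hHerm.eigenvalues v₀ = r ∧
      ∀ v : V, v ≠ v₀ → |hHerm.eigenvalues v| ≤ 2 * Real.sqrt ((r : ℝ) - 1))
    (hk : 3 ∣ Fintype.card V)
    (A B : Finset V)
    (hA : A.card = Fintype.card V / 3) (hB : B.card = Fintype.card V / 3) :
    ∃ x ∈ A, ∃ y ∈ B, (bipDouble U).Adj (Sum.inl x) (Sum.inr y) := by
  obtain ⟨v₀, hv₀, hgap⟩ := hRam
  have hlt : 2 * √((r : ℝ) - 1) < r / 3 :=
    two_mul_sqrt_sub_one_lt_div_three (by exact_mod_cast hr)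
  have hmix := SimpleGraph.abs_sum_adjMatrix_sub_le hreg hHerm hv₀ (by positivity) (by linarith)
    hgap A B
  by_contra! hno
  have hzero : ∑ x ∈ A, ∑ y ∈ B, U.adjMatrix ℝ x y = 0 :=
    Finset.sum_eq_zero fun x hx => Finset.sum_eq_zero fun y hy => by
      rw [SimpleGraph.adjMatrix_apply, if_neg fun h => hno x hx y hy (Or.inl h)]
  set K : ℝ := (Fintype.card V : ℝ)
  have hK : 0 < K := Nat.cast_pos.mpr (Fintype.card_pos_iff.mpr ⟨v₀⟩)
  have hthird : ((Fintype.card V / 3 : ℕ) : ℝ) = K / 3 := Nat.cast_div hk (by norm_num)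
  rw [hzero, hA, hB, hthird, mul_assoc _ √(K / 3), Real.mul_self_sqrt (by positivity)] at hmix
  have hmain : |0 - r * (K / 3) * (K / 3) / K| = r * K / 9 := by
    rw [zero_sub, abs_neg, abs_of_nonneg (by positivity)]
    field_simp
    ring
  rw [hmain] at hmix
  nlinarith
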